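/- arXiv:2006.08806 — 4 statements merged into one kernel-verified Lean document; each statement's English description precedes it below -/
import Mathlib

section
/- Let t < T, let σ_1,…,σ_n be nonnegative reals, let ρ_{ij} ∈ [0,1] for all i ≠ j with ρ_{ij} = ρ_{ji}, and let w_1,…,w_n : [t,T] → ℝ be measurable functions with w_i(s) ≥ 0 for all i and s and ∑_{i=1}^n w_i(s) = 1 for all s ∈ [t,T]. Then η(t,T) = ∑_{i=1}^n (σ_i²/2) ∫_t^T (w_i(s)² − w_i(s)) ds + (1/2) ∑_{i ≠ j} σ_i σ_j ρ_{ij} ∫_t^T w_i(s) w_j(s) ds satisfies η(t,T) ≤ 0. -/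
open Finset

lemma key_pointwise (n : ℕ) (σ : Fin n → ℝ) (hσ : ∀ i, 0 ≤ σ i)
    (ρ : Fin n → Fin n → ℝ)
    (hρ0 : ∀ i j, i ≠ j → 0 ≤ ρ i j) (hρ1 : ∀ i j, i ≠ j → ρ i j ≤ 1)
    (x : Fin n → ℝ) (hx0 : ∀ i, 0 ≤ x i) (hx1 : ∑ i, x i = 1) :
    (∑ i, (σ i ^ 2 / 2) * ((x i) ^ 2 - x i))
      + (1 / 2) * ∑ i, ∑ j ∈ univ.filter (fun j => j ≠ i),
          σ i * σ j * ρ i j * (x i * x j) ≤ 0 := by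
  have hcross : ∀ i : Fin n, ∑ j ∈ univ.filter (fun j => j ≠ i),
      σ i * σ j * ρ i j * (x i * x j)
      ≤ ∑ j ∈ univ.filter (fun j => j ≠ i), (σ i * x i) * (σ j * x j) := by
    intro i
    refine Finset.sum_le_sum fun j hj => ?_
    have hji : j ≠ i := (Finset.mem_filter.mp hj).2
    have h1 : σ i * σ j * ρ i j * (x i * x j) ≤ σ i * σ j * 1 * (x i * x j) := by
      have : 0 ≤ σ i * σ j := mul_nonneg (hσ i) (hσ j)
      have : 0 ≤ σ i * σ j * (x i * x j) :=
        mul_nonneg ‹0 ≤ σ i * σ j› (mul_nonneg (hx0 i) (hx0 j))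
      nlinarith [hρ1 i j (Ne.symm hji), hρ0 i j (Ne.symm hji)]
    calc σ i * σ j * ρ i j * (x i * x j) ≤ σ i * σ j * 1 * (x i * x j) := h1
      _ = (σ i * x i) * (σ j * x j) := by ring
  have hCS : (∑ i, σ i * x i) ^ 2 ≤ ∑ i, σ i ^ 2 * x i := by
    have := Finset.sum_sq_le_sum_mul_sum_of_sq_eq_mul (univ : Finset (Fin n))
      (r := fun i => σ i * x i) (f := fun i => x i) (g := fun i => x i * σ i ^ 2)
      (fun i _ => hx0 i) (fun i _ => mul_nonneg (hx0 i) (sq_nonneg _))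
      (fun i _ => by ring)
    rw [hx1, one_mul] at this
    calc (∑ i, σ i * x i) ^ 2 ≤ ∑ i, x i * σ i ^ 2 := this
      _ = ∑ i, σ i ^ 2 * x i := by simp [mul_comm]
  have hsq : (∑ i, σ i * x i) ^ 2 = ∑ i, (σ i * x i) ^ 2
      + ∑ i, ∑ j ∈ univ.filter (fun j => j ≠ i), (σ i * x i) * (σ j * x j) := by
    rw [sq, Finset.sum_mul_sum]
    rw [← Finset.sum_add_distrib]
    refine Finset.sum_congr rfl fun i _ => ?_
    have h : (univ : Finset (Fin n)).filter (fun j => j ≠ i) = univ.erase i := by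
      ext j; simp [Finset.mem_erase, and_comm]
    rw [h, ← Finset.add_sum_erase _ (fun j => (σ i * x i) * (σ j * x j))
      (Finset.mem_univ i)]
    ring
  have hsum : (1 / 2) * ∑ i, ∑ j ∈ univ.filter (fun j => j ≠ i),
      σ i * σ j * ρ i j * (x i * x j)
      ≤ (1 / 2) * ((∑ i, σ i ^ 2 * x i) - ∑ i, (σ i * x i) ^ 2) := by
    have h2 : ∑ i, ∑ j ∈ univ.filter (fun j => j ≠ i),
        σ i * σ j * ρ i j * (x i * x j)
        ≤ ∑ i, ∑ j ∈ univ.filter (fun j => j ≠ i), (σ i * x i) * (σ j * x j) :=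
      Finset.sum_le_sum fun i _ => hcross i
    have h3 : ∑ i, ∑ j ∈ univ.filter (fun j => j ≠ i), (σ i * x i) * (σ j * x j)
        = (∑ i, σ i * x i) ^ 2 - ∑ i, (σ i * x i) ^ 2 := by
      rw [hsq]; ring
    nlinarith [hCS]
  have hfirst : (∑ i, (σ i ^ 2 / 2) * ((x i) ^ 2 - x i))
      = (1 / 2) * ((∑ i, (σ i * x i) ^ 2) - ∑ i, σ i ^ 2 * x i) := by
    rw [← Finset.sum_sub_distrib, Finset.mul_sum]
    refine Finset.sum_congr rfl fun i _ => ?_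
    ring
  rw [hfirst]
  nlinarith [hsum]

set_option maxHeartbeats 1000000 in
/-- Proposition 3: the log-discount η(t,T) for deterministic time-varying weights
is nonpositive. -/
theorem stmt_9 (n : ℕ) (hn : 1 ≤ n) (t T : ℝ) (htT : t < T)
    (σ : Fin n → ℝ) (hσ : ∀ i, 0 ≤ σ i)
    (ρ : Fin n → Fin n → ℝ)
    (hρ0 : ∀ i j, i ≠ j → 0 ≤ ρ i j) (hρ1 : ∀ i j, i ≠ j → ρ i j ≤ 1)
    (hρsym : ∀ i j, ρ i j = ρ j i)
    (w : Fin n → ℝ → ℝ) (hwmeas : ∀ i, Measurable (w i))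
    (hw0 : ∀ i, ∀ s ∈ Set.Icc t T, 0 ≤ w i s)
    (hwsum : ∀ s ∈ Set.Icc t T, ∑ i, w i s = 1) :
    (∑ i, (σ i ^ 2 / 2) * ∫ s in t..T, ((w i s) ^ 2 - w i s))
      + (1 / 2) * ∑ i, ∑ j ∈ univ.filter (fun j => j ≠ i),
          σ i * σ j * ρ i j * (∫ s in t..T, w i s * w j s) ≤ 0 := by
  -- pointwise bound w i s ≤ 1 on Icc
  have hw1 : ∀ i, ∀ s ∈ Set.Icc t T, w i s ≤ 1 := by
    intro i s hs
    have := Finset.single_le_sum (f := fun j => w j s)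
      (fun j _ => hw0 j s hs) (Finset.mem_univ i)
    rw [hwsum s hs] at this
    exact this
  -- integrability of bounded measurable functions
  have hbint : ∀ f : ℝ → ℝ, Measurable f → (∀ s ∈ Set.Icc t T, |f s| ≤ 1) →
      IntervalIntegrable f MeasureTheory.volume t T := by
    intro f hf hb
    rw [intervalIntegrable_iff_integrableOn_Ioc_of_le htT.le]
    refine MeasureTheory.Measure.integrableOn_of_bounded (M := 1) ?_ hf.aestronglyMeasurable ?_
    · simp [Real.volume_Ioc]
    · filter_upwards [MeasureTheory.ae_restrict_mem measurableSet_Ioc] with s hs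
      exact hb s (Set.Ioc_subset_Icc_self hs)
  have hIw2 : ∀ i, IntervalIntegrable (fun s => (w i s) ^ 2 - w i s)
      MeasureTheory.volume t T := by
    intro i
    refine hbint _ (((hwmeas i).pow_const 2).sub (hwmeas i)) fun s hs => ?_
    have h0 := hw0 i s hs; have h1 := hw1 i s hs
    rw [abs_le]; constructor <;> nlinarith
  have hIww : ∀ i j, IntervalIntegrable (fun s => w i s * w j s)
      MeasureTheory.volume t T := by
    intro i j
    refine hbint _ ((hwmeas i).mul (hwmeas j)) fun s hs => ?_
    have := hw0 i s hs; have := hw1 i s hs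
    have := hw0 j s hs; have := hw1 j s hs
    rw [abs_le]; constructor <;> nlinarith
  -- rewrite everything as a single interval integral
  have e1 : (∑ i, (σ i ^ 2 / 2) * ∫ s in t..T, ((w i s) ^ 2 - w i s))
      = ∫ s in t..T, ∑ i, (σ i ^ 2 / 2) * ((w i s) ^ 2 - w i s) := by
    rw [intervalIntegral.integral_finset_sum
      (f := fun i s => (σ i ^ 2 / 2) * ((w i s) ^ 2 - w i s))
      (fun i _ => (hIw2 i).const_mul _)]
    exact Finset.sum_congr rfl fun i _ => (intervalIntegral.integral_const_mul _ _).symm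
  have hInner : ∀ i : Fin n, IntervalIntegrable
      (fun s => ∑ j ∈ univ.filter (fun j => j ≠ i),
        σ i * σ j * ρ i j * (w i s * w j s)) MeasureTheory.volume t T := by
    intro i
    have h := IntervalIntegrable.sum (μ := MeasureTheory.volume) (a := t) (b := T)
      (univ.filter (fun j => j ≠ i))
      (f := fun j s => σ i * σ j * ρ i j * (w i s * w j s))
      (fun j _ => (hIww i j).const_mul _)
    rwa [Finset.sum_fn] at h
  have e2 : (∑ i, ∑ j ∈ univ.filter (fun j => j ≠ i),
      σ i * σ j * ρ i j * (∫ s in t..T, w i s * w j s))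
      = ∫ s in t..T, ∑ i, ∑ j ∈ univ.filter (fun j => j ≠ i),
          σ i * σ j * ρ i j * (w i s * w j s) := by
    rw [intervalIntegral.integral_finset_sum
      (f := fun i s => ∑ j ∈ univ.filter (fun j => j ≠ i),
        σ i * σ j * ρ i j * (w i s * w j s))
      (fun i _ => hInner i)]
    refine Finset.sum_congr rfl fun i _ => ?_
    rw [intervalIntegral.integral_finset_sum
      (f := fun j s => σ i * σ j * ρ i j * (w i s * w j s))
      (fun j _ => (hIww i j).const_mul _)]
    exact Finset.sum_congr rfl fun j _ => (intervalIntegral.integral_const_mul _ _).symm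
  have e3 : (1 / 2 : ℝ) * ∫ s in t..T, ∑ i, ∑ j ∈ univ.filter (fun j => j ≠ i),
        σ i * σ j * ρ i j * (w i s * w j s)
      = ∫ s in t..T, (1 / 2 : ℝ) * ∑ i, ∑ j ∈ univ.filter (fun j => j ≠ i),
        σ i * σ j * ρ i j * (w i s * w j s) :=
    (intervalIntegral.integral_const_mul _ _).symm
  have e4 : (∫ s in t..T, ∑ i, (σ i ^ 2 / 2) * ((w i s) ^ 2 - w i s))
      + (∫ s in t..T, (1 / 2 : ℝ) * ∑ i, ∑ j ∈ univ.filter (fun j => j ≠ i),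
          σ i * σ j * ρ i j * (w i s * w j s))
      = ∫ s in t..T, ((∑ i, (σ i ^ 2 / 2) * ((w i s) ^ 2 - w i s))
        + (1 / 2 : ℝ) * ∑ i, ∑ j ∈ univ.filter (fun j => j ≠ i),
          σ i * σ j * ρ i j * (w i s * w j s)) :=
    by
    have hA : IntervalIntegrable (fun s => ∑ i, (σ i ^ 2 / 2) * ((w i s) ^ 2 - w i s))
        MeasureTheory.volume t T := by
      have h := IntervalIntegrable.sum (μ := MeasureTheory.volume) (a := t) (b := T)
        (univ : Finset (Fin n))
        (f := fun i s => (σ i ^ 2 / 2) * ((w i s) ^ 2 - w i s))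
        (fun i _ => (hIw2 i).const_mul _)
      rwa [Finset.sum_fn] at h
    have hB : IntervalIntegrable (fun s => ∑ i, ∑ j ∈ univ.filter (fun j => j ≠ i),
        σ i * σ j * ρ i j * (w i s * w j s)) MeasureTheory.volume t T := by
      have h := IntervalIntegrable.sum (μ := MeasureTheory.volume) (a := t) (b := T)
        (univ : Finset (Fin n))
        (f := fun i s => ∑ j ∈ univ.filter (fun j => j ≠ i),
          σ i * σ j * ρ i j * (w i s * w j s))
        (fun i _ => hInner i)
      rwa [Finset.sum_fn] at h
    exact (intervalIntegral.integral_add hA (hB.const_mul (1 / 2 : ℝ))).symm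
  rw [e1, e2, e3, e4]
  have hnn : (0 : ℝ) ≤ ∫ s in t..T,
      -((∑ i, (σ i ^ 2 / 2) * ((w i s) ^ 2 - w i s))
        + (1 / 2 : ℝ) * ∑ i, ∑ j ∈ univ.filter (fun j => j ≠ i),
            σ i * σ j * ρ i j * (w i s * w j s)) := intervalIntegral.integral_nonneg htT.le
    (fun s hs => by
      have := key_pointwise n σ hσ ρ hρ0 hρ1 (fun i => w i s)
        (fun i => hw0 i s hs) (hwsum s hs)
      simp only [neg_nonneg] at *
      linarith)
  rw [intervalIntegral.integral_neg] at hnn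
  linarith
end

section
/- Let n ≥ 1 and s ≥ 1. For k = 0,1,…,s let w_1(k),…,w_n(k) be positive reals with ∑_{i=1}^n w_i(k) = 1, and for k = 1,…,s let R_1(k),…,R_n(k) and S_1(k),…,S_n(k) be positive reals. Define V(k) = ∏_{i=1}^n R_i(k)^{w_i(k)} for k = 1,…,s, let V(0) > 0 be given, and assume for each k = 1,…,s: (a) the geometric-mean constraint ∏_{i=1}^n R_i(k)^{w_i(k−1)} = V(k−1), and (b) the no-arbitrage condition R_i(k) S_i(k) = w_i(k−1) ∑_{j=1}^n R_j(k) S_j(k) for all i. Then V(s) = V(0) · ∏_{k=1}^s ∏_{i=1}^n (w_i(k−1)/S_i(k))^{w_i(k) − w_i(k−1)}. -/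
open Finset

/-- Equation (16): the discrete-time formula for the weighted geometric mean of a
G3M whose weights are updated at re-weighting times 1,…,s. -/
theorem stmt_10 (n s : ℕ) (hn : 1 ≤ n) (hs : 1 ≤ s)
    (w : ℕ → Fin n → ℝ) (R S : ℕ → Fin n → ℝ) (V : ℕ → ℝ)
    (hw : ∀ k ≤ s, ∀ i, 0 < w k i) (hwsum : ∀ k ≤ s, ∑ i, w k i = 1)
    (hR : ∀ k, 1 ≤ k → k ≤ s → ∀ i, 0 < R k i)
    (hS : ∀ k, 1 ≤ k → k ≤ s → ∀ i, 0 < S k i)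
    (hV0 : 0 < V 0)
    (hVdef : ∀ k, 1 ≤ k → k ≤ s → V k = ∏ i, R k i ^ (w k i))
    (hgm : ∀ k, 1 ≤ k → k ≤ s → ∏ i, R k i ^ (w (k - 1) i) = V (k - 1))
    (hnoarb : ∀ k, 1 ≤ k → k ≤ s → ∀ i,
        R k i * S k i = w (k - 1) i * ∑ j, R k j * S k j) :
    V s = V 0 * ∏ k ∈ Finset.Icc 1 s, ∏ i,
        (w (k - 1) i / S k i) ^ (w k i - w (k - 1) i) := by
  haveI : Nonempty (Fin n) := Fin.pos_iff_nonempty.mp hn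
  suffices h : ∀ m, m ≤ s → V m = V 0 * ∏ k ∈ Finset.Icc 1 m, ∏ i,
      (w (k - 1) i / S k i) ^ (w k i - w (k - 1) i) from h s le_rfl
  intro m hm
  induction m with
  | zero => simp
  | succ m ih =>
    have hm' : m ≤ s := Nat.le_of_succ_le hm
    have h1 : 1 ≤ m + 1 := Nat.le_add_left 1 m
    rw [Finset.prod_Icc_succ_top h1, ← mul_assoc, ← ih hm']
    have hms : m + 1 - 1 = m := rfl
    set T : ℝ := ∑ j, R (m+1) j * S (m+1) j with hT
    have hTpos : 0 < T :=
      Finset.sum_pos (fun j _ => mul_pos (hR _ h1 hm j) (hS _ h1 hm j)) Finset.univ_nonempty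
    have hRval : ∀ i, R (m+1) i = w m i / S (m+1) i * T := by
      intro i
      have h := hnoarb (m+1) h1 hm i
      rw [hms, ← hT] at h
      have hSpos := hS (m+1) h1 hm i
      rw [div_mul_eq_mul_div, eq_div_iff hSpos.ne']
      linarith [h]
    have hstep : V (m+1) = V m * ∏ i, (w m i / S (m+1) i) ^ (w (m+1) i - w m i) * T ^ (w (m+1) i - w m i) := by
      rw [hVdef (m+1) h1 hm]
      have : ∀ i : Fin n, R (m+1) i ^ (w (m+1) i)
          = R (m+1) i ^ (w m i) *
            ((w m i / S (m+1) i) ^ (w (m+1) i - w m i) * T ^ (w (m+1) i - w m i)) := by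
        intro i
        have hRpos := hR (m+1) h1 hm i
        have hRd : R (m+1) i ^ (w (m+1) i - w m i)
            = (w m i / S (m+1) i) ^ (w (m+1) i - w m i) * T ^ (w (m+1) i - w m i) := by
          rw [hRval i, Real.mul_rpow (div_pos (hw m hm' i) (hS (m+1) h1 hm i)).le hTpos.le]
        rw [← hRd, ← Real.rpow_add hRpos]
        congr 1
        ring
      rw [Finset.prod_congr rfl (fun i _ => this i), Finset.prod_mul_distrib]
      congr 1
      have := hgm (m+1) h1 hm
      rw [hms] at this
      exact this
    have hTprod : ∏ i, T ^ (w (m+1) i - w m i) = 1 := by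
      rw [← Real.rpow_sum_of_pos hTpos]
      have : ∑ i, (w (m+1) i - w m i) = 0 := by
        rw [Finset.sum_sub_distrib, hwsum (m+1) hm, hwsum m hm']
        ring
      rw [this, Real.rpow_zero]
    rw [hstep, Finset.prod_mul_distrib, hTprod, mul_one, hms]
end

section
/- Let n ≥ 1 and 0 ≤ t < T. Let w_1,…,w_n : [t,T] → (0,∞) be continuously differentiable with ∑_{i=1}^n w_i(s) = 1 for all s ∈ [t,T], and let S_1,…,S_n : [t,T] → (0,∞) be continuously differentiable. Let V(t) > 0, define V(T) = V(t) · exp(∑_{i=1}^n ∫_t^T log(w_i(s)/S_i(s)) w_i'(s) ds), and for s ∈ {t, T} define G(s) = V(s) · ∏_{i=1}^n (S_i(s)/w_i(s))^{w_i(s)}. Then G(T) = G(t) · exp(∑_{i=1}^n ∫_t^T w_i(s) S_i'(s)/S_i(s) ds). -/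
/-!
Write `A_i = w_i log (S_i / w_i)`, so that `log G = log V + ∑ A_i`. Differentiating,
`A_i' = w_i S_i'/S_i - log (w_i/S_i) w_i' - w_i'`: the first term is the price move, the second
is exactly the re-weighting term driving `V`, and the last sums to `0` because `∑ w_i = 1`.
Integrating from `t` to `T` and exponentiating gives the formula.
-/

open Finset Real

theorem hasDerivAt_mul_log_div {w S : ℝ → ℝ} {w' S' x : ℝ} (hw : HasDerivAt w w' x)
    (hS : HasDerivAt S S' x) (hwx : w x ≠ 0) (hSx : S x ≠ 0) :
    HasDerivAt (fun s => w s * log (S s / w s))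
      (w x * S' / S x - log (w x / S x) * w' - w') x := by
  have hlog := (hS.div hw hwx).log (div_ne_zero hSx hwx)
  refine (hw.mul hlog).congr_deriv ?_
  rw [Pi.div_apply, ← inv_div, log_inv]
  field_simp
  ring

theorem integral_mul_logDeriv_eq {w S w' S' : ℝ → ℝ} {a b : ℝ}
    (hw : ∀ s ∈ Set.uIcc a b, HasDerivAt w (w' s) s) (hw' : ContinuousOn w' (Set.uIcc a b))
    (hS : ∀ s ∈ Set.uIcc a b, HasDerivAt S (S' s) s) (hS' : ContinuousOn S' (Set.uIcc a b))
    (hw0 : ∀ s ∈ Set.uIcc a b, w s ≠ 0) (hS0 : ∀ s ∈ Set.uIcc a b, S s ≠ 0) :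
    ∫ s in a..b, w s * S' s / S s =
      (∫ s in a..b, log (w s / S s) * w' s)
        + (w b * log (S b / w b) - w a * log (S a / w a)) + (w b - w a) := by
  have hwc : ContinuousOn w (Set.uIcc a b) := fun s hs =>
    (hw s hs).continuousAt.continuousWithinAt
  have hSc : ContinuousOn S (Set.uIcc a b) := fun s hs =>
    (hS s hs).continuousAt.continuousWithinAt
  have hprice : IntervalIntegrable (fun s => w s * S' s / S s) MeasureTheory.volume a b :=
    ((hwc.mul hS').div hSc hS0).intervalIntegrable
  have hreweight :
      IntervalIntegrable (fun s => log (w s / S s) * w' s) MeasureTheory.volume a b :=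
    (((hwc.div hSc hS0).log fun s hs => div_ne_zero (hw0 s hs) (hS0 s hs)).mul
      hw').intervalIntegrable
  have hdw : IntervalIntegrable w' MeasureTheory.volume a b := hw'.intervalIntegrable
  have hA := intervalIntegral.integral_eq_sub_of_hasDerivAt
    (fun s hs => hasDerivAt_mul_log_div (hw s hs) (hS s hs) (hw0 s hs) (hS0 s hs))
    ((hprice.sub hreweight).sub hdw)
  rw [intervalIntegral.integral_sub (hprice.sub hreweight) hdw,
    intervalIntegral.integral_sub hprice hreweight,
    intervalIntegral.integral_eq_sub_of_hasDerivAt hw hdw] at hA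
  linarith

theorem prod_rpow_eq_exp_sum {ι : Type*} (s : Finset ι) {x : ι → ℝ} (hx : ∀ i ∈ s, 0 < x i)
    (y : ι → ℝ) : ∏ i ∈ s, x i ^ y i = exp (∑ i ∈ s, y i * log (x i)) := by
  rw [exp_sum]
  exact prod_congr rfl fun i hi => by rw [rpow_def_of_pos (hx i hi), mul_comm]

theorem stmt_11_general (n : ℕ) (t T : ℝ) (htT : t < T)
    (w S w' S' : Fin n → ℝ → ℝ)
    (hw : ∀ i, ∀ s ∈ Set.Icc t T, HasDerivAt (w i) (w' i s) s)
    (hw'c : ∀ i, ContinuousOn (w' i) (Set.Icc t T))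
    (hS : ∀ i, ∀ s ∈ Set.Icc t T, HasDerivAt (S i) (S' i s) s)
    (hS'c : ∀ i, ContinuousOn (S' i) (Set.Icc t T))
    (hwpos : ∀ i, ∀ s ∈ Set.Icc t T, 0 < w i s)
    (hSpos : ∀ i, ∀ s ∈ Set.Icc t T, 0 < S i s)
    (hwsum : ∀ s ∈ Set.Icc t T, ∑ i, w i s = 1)
    (Vt VT Gt GT : ℝ)
    (hVT : VT = Vt * Real.exp (∑ i, ∫ s in t..T, Real.log (w i s / S i s) * w' i s))
    (hGt : Gt = Vt * ∏ i, (S i t / w i t) ^ (w i t))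
    (hGT : GT = VT * ∏ i, (S i T / w i T) ^ (w i T)) :
    GT = Gt * Real.exp (∑ i, ∫ s in t..T, w i s * S' i s / S i s) := by
  have hI : Set.uIcc t T = Set.Icc t T := Set.uIcc_of_le htT.le
  have ht : t ∈ Set.Icc t T := Set.left_mem_Icc.2 htT.le
  have hT : T ∈ Set.Icc t T := Set.right_mem_Icc.2 htT.le
  have hprice i := integral_mul_logDeriv_eq (hI ▸ hw i) (hI ▸ hw'c i) (hI ▸ hS i)
    (hI ▸ hS'c i) (fun s hs => (hwpos i s (hI ▸ hs)).ne') (fun s hs => (hSpos i s (hI ▸ hs)).ne')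
  have hweights : ∑ i, (w i T - w i t) = 0 := by
    rw [sum_sub_distrib, hwsum T hT, hwsum t ht, sub_self]
  have hpayoff (u : ℝ) (hu : u ∈ Set.Icc t T) :
      ∏ i, (S i u / w i u) ^ (w i u) = exp (∑ i, w i u * log (S i u / w i u)) :=
    prod_rpow_eq_exp_sum _ (fun i _ => div_pos (hSpos i u hu) (hwpos i u hu)) _
  rw [hGT, hGt, hVT, hpayoff T hT, hpayoff t ht, sum_congr rfl fun i _ => hprice i,
    sum_add_distrib, sum_add_distrib, hweights, sum_sub_distrib, mul_assoc, mul_assoc,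
    ← exp_add, ← exp_add]
  congr 2
  ring

/-- Proposition 2 (smooth-path form): the dynamic-weight G3M LP payoff satisfies
G(T) = G(t) · exp(∑_i ∫_t^T w_i d log S_i). -/
theorem stmt_11 (n : ℕ) (hn : 1 ≤ n) (t T : ℝ) (ht : 0 ≤ t) (htT : t < T)
    (w S w' S' : Fin n → ℝ → ℝ)
    (hw : ∀ i, ∀ s ∈ Set.Icc t T, HasDerivAt (w i) (w' i s) s)
    (hw'c : ∀ i, ContinuousOn (w' i) (Set.Icc t T))
    (hS : ∀ i, ∀ s ∈ Set.Icc t T, HasDerivAt (S i) (S' i s) s)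
    (hS'c : ∀ i, ContinuousOn (S' i) (Set.Icc t T))
    (hwpos : ∀ i, ∀ s ∈ Set.Icc t T, 0 < w i s)
    (hSpos : ∀ i, ∀ s ∈ Set.Icc t T, 0 < S i s)
    (hwsum : ∀ s ∈ Set.Icc t T, ∑ i, w i s = 1)
    (Vt VT Gt GT : ℝ) (hVt : 0 < Vt)
    (hVT : VT = Vt * Real.exp (∑ i, ∫ s in t..T, Real.log (w i s / S i s) * w' i s))
    (hGt : Gt = Vt * ∏ i, (S i t / w i t) ^ (w i t))
    (hGT : GT = VT * ∏ i, (S i T / w i T) ^ (w i T)) :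
    GT = Gt * Real.exp (∑ i, ∫ s in t..T, w i s * S' i s / S i s) :=
  stmt_11_general n t T htT w S w' S' hw hw'c hS hS'c hwpos hSpos hwsum Vt VT Gt GT hVT hGt hGT
end

section
/- Fix constants K > 0, σ > 0, r ∈ ℝ, τ > 0. For x > 0 let d1(x) = (log(x/K) + (r + σ²/2)τ)/(σ√τ), d2(x) = d1(x) − σ√τ, and define g(x) = x Φ(d1(x)) − K e^{−rτ} Φ(d2(x)) + K e^{−rτ}. Then for every x > 0: g(x) > 0 and 0 ≤ x Φ(d1(x)) / g(x) ≤ 1. -/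
open MeasureTheory Real Set

/-- The standard normal cumulative distribution function. -/
noncomputable def stdNormalCDF (y : ℝ) : ℝ :=
  (Real.sqrt (2 * Real.pi))⁻¹ * ∫ u in Set.Iic y, Real.exp (-u ^ 2 / 2)

lemma aux_fun_eq : (fun u : ℝ => Real.exp (-u ^ 2 / 2)) = fun u => Real.exp (-(1/2) * u ^ 2) := by
  funext u; ring_nf

lemma aux_integrable : Integrable (fun u : ℝ => Real.exp (-u ^ 2 / 2)) := by
  rw [aux_fun_eq]; exact integrable_exp_neg_mul_sq (by norm_num)

lemma aux_total : (∫ u : ℝ, Real.exp (-u ^ 2 / 2)) = Real.sqrt (2 * Real.pi) := by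
  rw [aux_fun_eq, integral_gaussian]
  rw [div_div_eq_mul_div, div_one, mul_comm]

lemma stdNormalCDF_nonneg (y : ℝ) : 0 ≤ stdNormalCDF y := by
  unfold stdNormalCDF
  apply mul_nonneg (inv_nonneg.mpr (Real.sqrt_nonneg _))
  exact setIntegral_nonneg measurableSet_Iic (fun u _ => (Real.exp_pos _).le)

lemma stdNormalCDF_lt_one (y : ℝ) : stdNormalCDF y < 1 := by
  unfold stdNormalCDF
  have hs : 0 < Real.sqrt (2 * Real.pi) := Real.sqrt_pos.mpr (by positivity)
  rw [inv_mul_eq_div, div_lt_one hs, ← aux_total,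
    ← intervalIntegral.integral_Iic_add_Ioi (aux_integrable.integrableOn) (aux_integrable.integrableOn) (b := y)]
  have hpos : 0 < ∫ u in Set.Ioi y, Real.exp (-u ^ 2 / 2) := by
    rw [setIntegral_pos_iff_support_of_nonneg_ae]
    · have : (Function.support fun u : ℝ => Real.exp (-u ^ 2 / 2)) = Set.univ := by
        ext u; simp [Function.support, (Real.exp_pos _).ne']
      rw [this, Set.univ_inter]
      simpa using measure_Ioi_pos (volume : Measure ℝ) y -- may need adjustment
    · filter_upwards with u using (Real.exp_pos _).le
    · exact aux_integrable.integrableOn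
  linarith

/-- The portfolio g = call + Ke^{−rτ} in the money market satisfies the G3M weight
constraint: g > 0 and its elasticity numerator ratio xΦ(d1(x))/g(x) lies in [0,1]. -/
theorem stmt_17 (K σ r τ : ℝ) (hK : 0 < K) (hσ : 0 < σ) (hτ : 0 < τ)
    (d1 d2 g : ℝ → ℝ)
    (hd1 : ∀ x, d1 x = (Real.log (x / K) + (r + σ ^ 2 / 2) * τ) / (σ * Real.sqrt τ))
    (hd2 : ∀ x, d2 x = d1 x - σ * Real.sqrt τ)
    (hg : ∀ x, g x = x * stdNormalCDF (d1 x) - K * Real.exp (-r * τ) * stdNormalCDF (d2 x)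
        + K * Real.exp (-r * τ)) :
    ∀ x : ℝ, 0 < x →
      0 < g x
      ∧ 0 ≤ x * stdNormalCDF (d1 x) / g x
      ∧ x * stdNormalCDF (d1 x) / g x ≤ 1 := by
  intro x hx
  have h1 := stdNormalCDF_nonneg (d1 x)
  have h2 := stdNormalCDF_nonneg (d2 x)
  have h2' := stdNormalCDF_lt_one (d2 x)
  have hE : 0 < K * Real.exp (-r * τ) := by positivity
  have hnum : 0 ≤ x * stdNormalCDF (d1 x) := by positivity
  have hgpos : 0 < g x := by
    rw [hg]; nlinarith
  refine ⟨hgpos, div_nonneg hnum hgpos.le, ?_⟩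
  rw [div_le_one hgpos, hg]
  nlinarith
end
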